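/- arXiv:1811.05673 — 5 statements merged into one kernel-verified Lean document; each statement's English description precedes it below -/
import Mathlib

section
/- For 0 < a ≤ 1 and z ≥ 0, the upper incomplete Gamma function satisfies Γ(a,z) ≤ Γ(a)·(1 − (1 − e^{−z})^a) ≤ Γ(a)·e^{−z}. -/
/-!
Write `γ(a, y) = ∫₀^y e^{-t} t^{a-1} dt = Γ(a) - Γ(a, y)` and
`g(y) = γ(a, y) - Γ(a) (1 - e^{-y})^a`. Then `g(0) = 0`, `g(y) → 0` as `y → ∞`, and
`g'(y) = e^{-y} (y^{a-1} - Γ(a+1) (1 - e^{-y})^{a-1})`. Since `a - 1 ≤ 0`, this has the sign of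
`-h(y)` for `h(y) = y - K (1 - e^{-y})` with `K^{a-1} = Γ(a+1)`. As `h` is convex with `h(0) = 0`,
`g` first increases and then decreases, so `g ≥ 0` on `[0, ∞)`. The second inequality is
`u ≤ u^a` for `u = 1 - e^{-z} ∈ [0, 1]`.
-/

open MeasureTheory Real Filter ProbabilityTheory

/-- Upper incomplete Gamma function `Γ(a,x) = ∫_x^∞ e^{-t} t^{a-1} dt`. -/
noncomputable def upperGamma (a x : ℝ) : ℝ := ∫ t in Set.Ioi x, Real.exp (-t) * t ^ (a - 1)

/-- Regularized upper incomplete Gamma function `Q(a,x) = Γ(a,x)/Γ(a)`. -/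
noncomputable def regQ (a x : ℝ) : ℝ := upperGamma a x / Real.Gamma a

open Set Topology

lemma convexOn_exp_neg : ConvexOn ℝ univ fun y : ℝ => exp (-y) := by
  simpa [Function.comp_def] using
    convexOn_exp.comp_affineMap (LinearMap.toAffineMap (-(LinearMap.id : ℝ →ₗ[ℝ] ℝ)))

lemma convexOn_sub_mul_one_sub_exp_neg {K : ℝ} (hK : 0 ≤ K) :
    ConvexOn ℝ univ fun y => y - K * (1 - exp (-y)) := by
  refine (((convexOn_id convex_univ).add (convexOn_exp_neg.smul hK)).add_const (-K)).congr
    fun y _ => ?_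
  simp only [Pi.add_apply, id_eq, smul_eq_mul]
  ring

lemma hasDerivAt_one_sub_exp_neg_rpow (a : ℝ) {x : ℝ} (hx : 0 < x) :
    HasDerivAt (fun y => (1 - exp (-y)) ^ a) (a * (1 - exp (-x)) ^ (a - 1) * exp (-x)) x := by
  have h := ((hasDerivAt_neg x).exp.const_sub 1).rpow_const (p := a)
    (Or.inl (sub_pos.2 (exp_lt_one_iff.2 (neg_lt_zero.2 hx))).ne')
  convert h using 1
  ring

lemma nonneg_of_hasDerivAt_of_convex_sign {g g' h : ℝ → ℝ}
    (hg : ∀ x > 0, HasDerivAt g (g' x) x) (hg0 : g 0 = 0) (hgc : ContinuousWithinAt g (Ici 0) 0)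
    (hgt : Tendsto g atTop (𝓝 0))
    (hh : ConvexOn ℝ (Ici 0) h) (hh0 : h 0 = 0)
    (hpos : ∀ x > 0, h x ≤ 0 → 0 ≤ g' x) (hneg : ∀ x > 0, 0 ≤ h x → g' x ≤ 0)
    {z : ℝ} (hz : 0 ≤ z) : 0 ≤ g z := by
  rcases le_or_gt (h z) 0 with hhz | hhz
  · have hmono : MonotoneOn g (Icc 0 z) := by
      refine monotoneOn_of_hasDerivWithinAt_nonneg (f' := g') (convex_Icc 0 z) ?_ ?_ ?_
      · intro x hx
        rcases hx.1.eq_or_lt with rfl | hx0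
        · exact hgc.mono Icc_subset_Ici_self
        · exact (hg x hx0).continuousAt.continuousWithinAt
      · rw [interior_Icc]
        exact fun x hx => (hg x hx.1).hasDerivWithinAt
      · rw [interior_Icc]
        intro x hx
        refine hpos x hx.1 ((hh.le_max_of_mem_Icc self_mem_Ici hz ⟨hx.1.le, hx.2.le⟩).trans ?_)
        simp [hh0, hhz]
    simpa [hg0] using hmono (left_mem_Icc.2 hz) (right_mem_Icc.2 hz) hz
  · have hz0 : 0 < z := lt_of_le_of_ne hz (by rintro rfl; simp [hh0] at hhz)
    have hanti : AntitoneOn g (Ici z) := by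
      refine antitoneOn_of_hasDerivWithinAt_nonpos (f' := g') (convex_Ici z) ?_ ?_ ?_
      · exact fun x hx => (hg x (hz0.trans_le hx)).continuousAt.continuousWithinAt
      · rw [interior_Ici]
        exact fun x hx => (hg x (hz0.trans hx)).hasDerivWithinAt
      · rw [interior_Ici]
        intro x hx
        refine hneg x (hz0.trans hx) (not_lt.1 fun hhx => hhz.not_ge ?_)
        refine (hh.le_max_of_mem_Icc self_mem_Ici (hz0.trans hx).le ⟨hz, hx.le⟩).trans ?_
        simp [hh0, hhx.le]
    exact le_of_tendsto hgt ((eventually_ge_atTop z).mono fun x hx => hanti self_mem_Ici hx hx)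

section lowerGamma

noncomputable def lowerGamma (a x : ℝ) : ℝ := ∫ t in (0 : ℝ)..x, exp (-t) * t ^ (a - 1)

variable {a : ℝ}

lemma intervalIntegrable_gammaIntegrand (ha : 0 < a) {x : ℝ} (hx : 0 ≤ x) :
    IntervalIntegrable (fun t => exp (-t) * t ^ (a - 1)) volume 0 x :=
  (intervalIntegrable_iff_integrableOn_Ioc_of_le hx).2
    ((GammaIntegral_convergent ha).mono_set Ioc_subset_Ioi_self)

lemma lowerGamma_add_upperGamma (ha : 0 < a) {x : ℝ} (hx : 0 ≤ x) :
    lowerGamma a x + upperGamma a x = Gamma a := by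
  have hInt := GammaIntegral_convergent ha
  rw [lowerGamma, intervalIntegral.integral_of_le hx, upperGamma, Gamma_eq_integral ha,
    ← setIntegral_union (Ioc_disjoint_Ioi le_rfl) measurableSet_Ioi
      (hInt.mono_set Ioc_subset_Ioi_self) (hInt.mono_set (Ioi_subset_Ioi hx)),
    Ioc_union_Ioi_eq_Ioi hx]

lemma tendsto_lowerGamma_atTop (ha : 0 < a) : Tendsto (lowerGamma a) atTop (𝓝 (Gamma a)) := by
  rw [Gamma_eq_integral ha]
  exact intervalIntegral_tendsto_integral_Ioi 0 (GammaIntegral_convergent ha) tendsto_id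

lemma continuousWithinAt_lowerGamma_zero (ha : 0 < a) :
    ContinuousWithinAt (lowerGamma a) (Ici 0) 0 := by
  rw [← continuousWithinAt_Icc_iff_Ici one_pos]
  exact intervalIntegral.continuousWithinAt_primitive (measure_singleton 0)
    (by simpa using intervalIntegrable_gammaIntegrand ha zero_le_one)

lemma hasDerivAt_lowerGamma (ha : 0 < a) {x : ℝ} (hx : 0 < x) :
    HasDerivAt (lowerGamma a) (exp (-x) * x ^ (a - 1)) x := by
  have hcont : ContinuousOn (fun t => exp (-t) * t ^ (a - 1)) (Ioi 0) :=
    fun t ht => ((continuous_exp.comp continuous_neg).continuousAt.mul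
      (continuousAt_rpow_const t (a - 1) (Or.inl (ne_of_gt ht)))).continuousWithinAt
  exact intervalIntegral.integral_hasDerivAt_right (intervalIntegrable_gammaIntegrand ha hx.le)
    (hcont.stronglyMeasurableAtFilter isOpen_Ioi x hx) (hcont.continuousAt (Ioi_mem_nhds hx))

end lowerGamma

lemma hasDerivAt_lowerGamma_sub_Gamma_mul_one_sub_exp_neg_rpow {a x : ℝ} (ha : 0 < a)
    (hx : 0 < x) :
    HasDerivAt (fun y => lowerGamma a y - Gamma a * (1 - exp (-y)) ^ a)
      (exp (-x) * (x ^ (a - 1) - Gamma (a + 1) * (1 - exp (-x)) ^ (a - 1))) x := by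
  refine ((hasDerivAt_lowerGamma ha hx).sub
    ((hasDerivAt_one_sub_exp_neg_rpow a hx).const_mul (Gamma a))).congr_deriv ?_
  rw [Gamma_add_one ha.ne']
  ring

lemma Gamma_mul_one_sub_exp_neg_rpow_le_lowerGamma {a z : ℝ} (ha : 0 < a) (ha1 : a ≤ 1)
    (hz : 0 ≤ z) : Gamma a * (1 - exp (-z)) ^ a ≤ lowerGamma a z := by
  set L := Gamma (a + 1)
  have hL : 0 < L := Gamma_pos_of_pos (by linarith)
  -- `K ^ (a - 1) = L`; for `a = 1` through the junk value `0⁻¹ = 0`, which makes `K = 1`.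
  set K := L ^ (a - 1)⁻¹
  have hK : 0 < K := rpow_pos_of_pos hL _
  have hu : ∀ x > 0, 0 < 1 - exp (-x) := fun x hx =>
    sub_pos.2 (exp_lt_one_iff.2 (neg_lt_zero.2 hx))
  have hKL : K ^ (a - 1) = L := by
    rcases ha1.eq_or_lt with rfl | ha1
    · norm_num [K, L, one_add_one_eq_two]
    · exact rpow_inv_rpow hL.le (sub_ne_zero.2 ha1.ne)
  have hKu : ∀ x > 0, (K * (1 - exp (-x))) ^ (a - 1) = L * (1 - exp (-x)) ^ (a - 1) :=
    fun x hx => by rw [mul_rpow hK.le (hu x hx).le, hKL]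
  have hcont : Continuous fun y => Gamma a * (1 - exp (-y)) ^ a := by
    fun_prop (disch := exact ha.le)
  have hlim : Tendsto (fun y => 1 - exp (-y)) atTop (𝓝 1) := by
    simpa using (tendsto_const_nhds (x := (1 : ℝ))).sub tendsto_exp_neg_atTop_nhds_zero
  refine sub_nonneg.1 (nonneg_of_hasDerivAt_of_convex_sign
    (fun x hx => hasDerivAt_lowerGamma_sub_Gamma_mul_one_sub_exp_neg_rpow ha hx)
    ?_ ((continuousWithinAt_lowerGamma_zero ha).sub hcont.continuousWithinAt) ?_
    ((convexOn_sub_mul_one_sub_exp_neg hK.le).subset (subset_univ _) (convex_Ici 0))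
    (by simp) ?_ ?_ hz)
  · simp [lowerGamma, zero_rpow ha.ne']
  · simpa using (tendsto_lowerGamma_atTop ha).sub
      ((tendsto_const_nhds (x := Gamma a)).mul (hlim.rpow_const (p := a) (Or.inl one_ne_zero)))
  · intro x hx hhx
    have := rpow_le_rpow_of_nonpos hx (sub_nonpos.1 hhx) (by linarith : a - 1 ≤ 0)
    rw [hKu x hx] at this
    exact mul_nonneg (exp_pos _).le (sub_nonneg.2 this)
  · intro x hx hhx
    have := rpow_le_rpow_of_nonpos (mul_pos hK (hu x hx)) (sub_nonneg.1 hhx)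
      (by linarith : a - 1 ≤ 0)
    rw [hKu x hx] at this
    exact mul_nonpos_of_nonneg_of_nonpos (exp_pos _).le (sub_nonpos.2 this)

lemma upperGamma_le_Gamma_mul_one_sub_rpow {a z : ℝ} (ha : 0 < a) (ha1 : a ≤ 1) (hz : 0 ≤ z) :
    upperGamma a z ≤ Gamma a * (1 - (1 - exp (-z)) ^ a) := by
  have := lowerGamma_add_upperGamma ha hz
  linarith [Gamma_mul_one_sub_exp_neg_rpow_le_lowerGamma ha ha1 hz]

theorem stmt3 (a z : ℝ) (ha : 0 < a) (ha1 : a ≤ 1) (hz : 0 ≤ z) :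
    upperGamma a z ≤ Real.Gamma a * (1 - (1 - Real.exp (-z)) ^ a) ∧
      Real.Gamma a * (1 - (1 - Real.exp (-z)) ^ a) ≤ Real.Gamma a * Real.exp (-z) := by
  refine ⟨upperGamma_le_Gamma_mul_one_sub_rpow ha ha1 hz, ?_⟩
  have hu : 1 - exp (-z) ≤ (1 - exp (-z)) ^ a :=
    self_le_rpow_of_le_one (sub_nonneg.2 (exp_le_one_iff.2 (neg_nonpos.2 hz)))
      (sub_le_self _ (exp_pos _).le) ha1
  exact mul_le_mul_of_nonneg_left (by linarith) (Gamma_pos_of_pos ha).le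
end

section
/- Let 0 < a ≤ 1 and let Q(a,·) be the regularized upper incomplete Gamma function, which is a decreasing bijection from [0,∞) to (0,1]; let Q^{-1}(a,·) be its inverse. Then for every y ∈ (0,1], Q^{-1}(a,y) ≤ log(1/y). -/
open MeasureTheory Real Filter ProbabilityTheory

lemma upperGamma_shift (a z : ℝ) :
    upperGamma a z = ∫ s in Set.Ioi (0:ℝ), Real.exp (-(s + z)) * (s + z) ^ (a - 1) := by
  unfold upperGamma
  rw [← integral_indicator measurableSet_Ioi, ← integral_indicator measurableSet_Ioi]
  rw [← MeasureTheory.integral_add_right_eq_self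
      (Set.indicator (Set.Ioi z) fun t => Real.exp (-t) * t ^ (a - 1)) z]
  congr 1
  ext x
  by_cases hx : 0 < x
  · rw [Set.indicator_of_mem (by simpa using hx), Set.indicator_of_mem (by simpa using hx)]
  · rw [Set.indicator_of_notMem (by simpa using hx), Set.indicator_of_notMem (by simpa using hx)]

lemma upperGamma_le (a z : ℝ) (ha : 0 < a) (ha1 : a ≤ 1) (hz : 0 ≤ z) :
    upperGamma a z ≤ Real.exp (-z) * Real.Gamma a := by
  rw [upperGamma_shift, Real.Gamma_eq_integral ha, ← smul_eq_mul, ← integral_smul]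
  apply integral_mono_of_nonneg
  · filter_upwards [ae_restrict_mem measurableSet_Ioi] with s hs
    simp only [Set.mem_Ioi] at hs
    have h0 : 0 < s + z := by linarith
    positivity
  · exact (Real.GammaIntegral_convergent ha).smul (Real.exp (-z))
  · filter_upwards [ae_restrict_mem measurableSet_Ioi] with s hs
    simp only [Set.mem_Ioi] at hs
    have h1 : (s + z) ^ (a - 1) ≤ s ^ (a - 1) :=
      Real.rpow_le_rpow_of_nonpos hs (by linarith) (by linarith)
    have h2 : Real.exp (-(s + z)) = Real.exp (-z) * Real.exp (-s) := by
      rw [← Real.exp_add]; ring_nf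
    rw [smul_eq_mul, h2]
    have : (0:ℝ) ≤ Real.exp (-z) * Real.exp (-s) := by positivity
    calc Real.exp (-z) * Real.exp (-s) * (s + z) ^ (a - 1)
        ≤ Real.exp (-z) * Real.exp (-s) * s ^ (a - 1) := by
          exact mul_le_mul_of_nonneg_left h1 this
      _ = Real.exp (-z) * (Real.exp (-s) * s ^ (a - 1)) := by ring

theorem stmt6 (a y z : ℝ) (ha : 0 < a) (ha1 : a ≤ 1) (hy0 : 0 < y) (hy1 : y ≤ 1)
    (hz : 0 ≤ z) (hQ : regQ a z = y) :
    z ≤ Real.log (1 / y) := by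
  have hG : 0 < Real.Gamma a := Real.Gamma_pos_of_pos ha
  have hU : upperGamma a z = y * Real.Gamma a := by
    rw [regQ] at hQ
    field_simp at hQ
    linarith [hQ]
  have key : y * Real.Gamma a ≤ Real.exp (-z) * Real.Gamma a :=
    hU ▸ upperGamma_le a z ha ha1 hz
  have hy : y ≤ Real.exp (-z) := le_of_mul_le_mul_right key hG
  have := Real.log_le_log hy0 hy
  rw [Real.log_exp] at this
  rw [Real.log_div one_ne_zero (ne_of_gt hy0), Real.log_one]
  linarith
end

section
/- Let 0 < a ≤ 1. For every y ∈ (0,1] with y ≤ a, the inverse regularized upper incomplete Gamma function satisfies Q^{-1}(a,y) ≥ Γ(1+a)^{1/a} · log(a/y). -/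
open MeasureTheory Real Filter ProbabilityTheory

section AuxStmt7
open Finset Set
set_option maxRecDepth 8000

private lemma gridKey (a p q : ℝ) (hpa : p ≤ a) (haq : a ≤ q) (hp0 : 0 ≤ p) (hq1 : q ≤ 1)
    (hnum : 1/(2.7182818283 - 1 + p) + (2.7182818286 - 1)/(2.7182818283 - 1 + p)^2
        ≤ (∑ j ∈ Finset.range 10, 1/((j:ℝ)+1+q)^2) + 1/(11+q) - 1/(1000+p)) :
    1/(Real.exp 1 - 1 + a) + (Real.exp 1 - 1)/(Real.exp 1 - 1 + a)^2
      ≤ (∑ j ∈ Finset.range 10, 1/((j:ℝ)+1+a)^2) + 1/(11+a) - 1/(1000+a) := by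
  have hc1 := Real.exp_one_gt_d9
  have hc2 := Real.exp_one_lt_d9
  have hdp : (0:ℝ) < 2.7182818283 - 1 + p := by norm_num; linarith
  have hda : (0:ℝ) < Real.exp 1 - 1 + a := by linarith
  have hle : 2.7182818283 - 1 + p ≤ Real.exp 1 - 1 + a := by linarith
  have A : 1/(Real.exp 1 - 1 + a) ≤ 1/(2.7182818283 - 1 + p) :=
    one_div_le_one_div_of_le hdp hle
  have B : (Real.exp 1 - 1)/(Real.exp 1 - 1 + a)^2
      ≤ (2.7182818286 - 1)/(2.7182818283 - 1 + p)^2 := by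
    apply div_le_div₀ (by norm_num) (by linarith) (by positivity)
    exact pow_le_pow_left₀ hdp.le hle 2
  have C : (∑ j ∈ Finset.range 10, 1/((j:ℝ)+1+q)^2) ≤ ∑ j ∈ Finset.range 10, 1/((j:ℝ)+1+a)^2 := by
    apply Finset.sum_le_sum
    intro j _
    have hj : (0:ℝ) ≤ (j:ℝ) := Nat.cast_nonneg j
    have ha0 : (0:ℝ) ≤ a := le_trans hp0 hpa
    have h1 : (0:ℝ) < (j:ℝ)+1+a := by linarith
    apply one_div_le_one_div_of_le (by positivity)
    apply pow_le_pow_left₀ (by linarith) (by linarith) 2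
  have D : 1/(11+q) ≤ 1/(11+a) := one_div_le_one_div_of_le (by linarith) (by linarith)
  have E : 1/(1000+a) ≤ 1/(1000+p) := one_div_le_one_div_of_le (by linarith) (by linarith)
  linarith

private lemma phi2_num (a : ℝ) (h0 : 0 < a) (h1 : a < 1) :
    1/(Real.exp 1 - 1 + a) + (Real.exp 1 - 1)/(Real.exp 1 - 1 + a)^2
      ≤ (∑ j ∈ Finset.range 10, 1/((j:ℝ)+1+a)^2) + 1/(11+a) - 1/(1000+a) := by
  rcases le_or_gt a (1/8) with h | h
  · exact gridKey a 0 (1/8) h0.le h (by norm_num) (by norm_num)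
      (by norm_num [Finset.sum_range_succ])
  rcases le_or_gt a (1/4) with h2 | h2
  · exact gridKey a (1/8) (1/4) h.le h2 (by norm_num) (by norm_num)
      (by norm_num [Finset.sum_range_succ])
  rcases le_or_gt a (3/8) with h3 | h3
  · exact gridKey a (1/4) (3/8) h2.le h3 (by norm_num) (by norm_num)
      (by norm_num [Finset.sum_range_succ])
  rcases le_or_gt a (1/2) with h4 | h4
  · exact gridKey a (3/8) (1/2) h3.le h4 (by norm_num) (by norm_num)
      (by norm_num [Finset.sum_range_succ])
  rcases le_or_gt a (5/8) with h5 | h5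
  · exact gridKey a (1/2) (5/8) h4.le h5 (by norm_num) (by norm_num)
      (by norm_num [Finset.sum_range_succ])
  rcases le_or_gt a (11/16) with h6 | h6
  · exact gridKey a (5/8) (11/16) h5.le h6 (by norm_num) (by norm_num)
      (by norm_num [Finset.sum_range_succ])
  rcases le_or_gt a (3/4) with h7 | h7
  · exact gridKey a (11/16) (3/4) h6.le h7 (by norm_num) (by norm_num)
      (by norm_num [Finset.sum_range_succ])
  rcases le_or_gt a (13/16) with h8 | h8
  · exact gridKey a (3/4) (13/16) h7.le h8 (by norm_num) (by norm_num)
      (by norm_num [Finset.sum_range_succ])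
  rcases le_or_gt a (7/8) with h9 | h9
  · exact gridKey a (13/16) (7/8) h8.le h9 (by norm_num) (by norm_num)
      (by norm_num [Finset.sum_range_succ])
  rcases le_or_gt a (15/16) with h10 | h10
  · exact gridKey a (7/8) (15/16) h9.le h10 (by norm_num) (by norm_num)
      (by norm_num [Finset.sum_range_succ])
  · exact gridKey a (15/16) 1 h10.le h1.le (by norm_num) (by norm_num)
      (by norm_num [Finset.sum_range_succ])

private lemma sum_lb (a : ℝ) (h0 : 0 < a) :
    (∑ j ∈ Finset.range 10, 1/((j:ℝ)+1+a)^2) + (1/(11+a) - 1/(1000+a))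
      ≤ ∑ j ∈ Finset.range 999, 1/((j:ℝ)+1+a)^2 := by
  set F : ℕ → ℝ := fun j => 1/((j:ℝ)+1+a) with hF
  set G : ℕ → ℝ := fun j => 1/((j:ℝ)+1+a)^2 with hG
  have hsplit : ∑ j ∈ Finset.range 999, G j
      = (∑ j ∈ Finset.range 10, G j) + ∑ j ∈ Finset.Ico 10 999, G j := by
    rw [Finset.range_eq_Ico, ← Finset.sum_Ico_consecutive _ (by norm_num : (0:ℕ) ≤ 10)
      (by norm_num : (10:ℕ) ≤ 999), ← Finset.range_eq_Ico]
  rw [hsplit]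
  have htel : ∑ j ∈ Finset.Ico 10 999, (F j - F (j+1)) = 1/(11+a) - 1/(1000+a) := by
    rw [Finset.sum_Ico_eq_sub _ (by norm_num : (10:ℕ) ≤ 999),
      Finset.sum_range_sub' F, Finset.sum_range_sub' F]
    simp only [hF]
    norm_num
  have hterm : ∀ j ∈ Finset.Ico 10 999, F j - F (j+1) ≤ G j := by
    intro j _
    have hj : (0:ℝ) ≤ (j:ℝ) := Nat.cast_nonneg j
    have hx : (0:ℝ) < (j:ℝ)+1+a := by linarith
    have hx1 : (0:ℝ) < (j:ℝ)+1+1+a := by linarith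
    have heq : F j - F (j+1) = 1/(((j:ℝ)+1+a)*((j:ℝ)+1+1+a)) := by
      simp only [hF]
      push_cast
      rw [div_sub_div _ _ (ne_of_gt hx) (ne_of_gt (by linarith : (0:ℝ) < (j:ℝ)+1+1+a))]
      ring_nf
    rw [heq]
    simp only [hG, pow_two]
    apply one_div_le_one_div_of_le (mul_pos hx hx)
    nlinarith
  have := Finset.sum_le_sum hterm
  linarith [htel ▸ this]

noncomputable def auxF0 (a : ℝ) : ℝ :=
  a * Real.log 1000 + (∑ j ∈ Finset.range 999, (Real.log ((j:ℝ)+1) - Real.log ((j:ℝ)+1+a)))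
    - a * (Real.log (Real.exp 1 - 1 + a) - 1)

noncomputable def auxF1 (a : ℝ) : ℝ :=
  Real.log 1000 - (∑ j ∈ Finset.range 999, 1/((j:ℝ)+1+a))
    - (Real.log (Real.exp 1 - 1 + a) - 1) - a/(Real.exp 1 - 1 + a)

noncomputable def auxF2 (a : ℝ) : ℝ :=
  (∑ j ∈ Finset.range 999, 1/((j:ℝ)+1+a)^2) - 1/(Real.exp 1 - 1 + a)
    - (Real.exp 1 - 1)/(Real.exp 1 - 1 + a)^2

private lemma hasDeriv_auxF0 (a : ℝ) (h0 : -(1/2) < a) : HasDerivAt auxF0 (auxF1 a) a := by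
  have he := Real.exp_one_gt_d9
  have hea : (0:ℝ) < Real.exp 1 - 1 + a := by linarith
  have h1 : HasDerivAt (fun a : ℝ => a * Real.log 1000) (Real.log 1000) a :=
    hasDerivAt_mul_const _
  have hsum : HasDerivAt (fun a : ℝ => ∑ j ∈ Finset.range 999, (Real.log ((j:ℝ)+1) - Real.log ((j:ℝ)+1+a)))
      (∑ j ∈ Finset.range 999, (0 - 1/((j:ℝ)+1+a))) a := by
    apply HasDerivAt.fun_sum
    intro j _
    have hj : (0:ℝ) ≤ (j:ℝ) := Nat.cast_nonneg j
    have hja : (0:ℝ) < (j:ℝ)+1+a := by linarith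
    have hid : HasDerivAt (fun a : ℝ => (j:ℝ)+1+a) 1 a := (hasDerivAt_id a).const_add _
    have hlog := hid.log (ne_of_gt hja)
    simpa using (hasDerivAt_const a (Real.log ((j:ℝ)+1))).fun_sub hlog
  have h3 : HasDerivAt (fun a : ℝ => a * (Real.log (Real.exp 1 - 1 + a) - 1))
      (1 * (Real.log (Real.exp 1 - 1 + a) - 1) + a * (1/(Real.exp 1 - 1 + a))) a := by
    have hid : HasDerivAt (fun a : ℝ => Real.exp 1 - 1 + a) 1 a := (hasDerivAt_id a).const_add _
    have hlog := (hid.log (ne_of_gt hea)).sub_const 1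
    simpa using (hasDerivAt_id' a).fun_mul hlog
  have := (h1.fun_add hsum).fun_sub h3
  refine this.congr_deriv (Eq.symm ?_)
  unfold auxF1
  rw [Finset.sum_sub_distrib]
  simp [Finset.sum_const]
  ring

private lemma hasDeriv_auxF1 (a : ℝ) (h0 : -(1/2) < a) : HasDerivAt auxF1 (auxF2 a) a := by
  have he := Real.exp_one_gt_d9
  have hea : (0:ℝ) < Real.exp 1 - 1 + a := by linarith
  have hsum : HasDerivAt (fun a : ℝ => ∑ j ∈ Finset.range 999, 1/((j:ℝ)+1+a))
      (∑ j ∈ Finset.range 999, -(1/((j:ℝ)+1+a)^2)) a := by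
    apply HasDerivAt.fun_sum
    intro j _
    have hj : (0:ℝ) ≤ (j:ℝ) := Nat.cast_nonneg j
    have hja : (0:ℝ) < (j:ℝ)+1+a := by linarith
    have hid : HasDerivAt (fun a : ℝ => (j:ℝ)+1+a) 1 a := (hasDerivAt_id a).const_add _
    have := hid.inv (ne_of_gt hja)
    simp only [one_div]
    refine this.congr_deriv (Eq.symm ?_)
    ring
  have hid : HasDerivAt (fun a : ℝ => Real.exp 1 - 1 + a) 1 a := (hasDerivAt_id a).const_add _
  have hlog := hid.log (ne_of_gt hea)
  have hdiv : HasDerivAt (fun a : ℝ => a/(Real.exp 1 - 1 + a))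
      ((1 * (Real.exp 1 - 1 + a) - a * 1)/(Real.exp 1 - 1 + a)^2) a :=
    (hasDerivAt_id a).div hid (ne_of_gt hea)
  have hconst : HasDerivAt (fun _ : ℝ => Real.log 1000) 0 a := hasDerivAt_const _ _
  have := ((hconst.fun_sub hsum).fun_sub (hlog.sub_const 1)).fun_sub hdiv
  refine this.congr_deriv (Eq.symm ?_)
  unfold auxF2
  rw [Finset.sum_neg_distrib]
  have : (1 * (Real.exp 1 - 1 + a) - a * 1) = Real.exp 1 - 1 := by ring
  rw [this]
  ring

private lemma auxF2_nonneg (a : ℝ) (h0 : 0 < a) (h1 : a < 1) : 0 ≤ auxF2 a := by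
  have := phi2_num a h0 h1
  have := sum_lb a h0
  unfold auxF2
  linarith

private lemma auxF0_convex : ConvexOn ℝ (Set.Icc (0:ℝ) 1) auxF0 := by
  apply convexOn_of_hasDerivWithinAt2_nonneg (convex_Icc 0 1) (f' := auxF1) (f'' := auxF2)
  · intro x hx
    exact (hasDeriv_auxF0 x (by linarith [hx.1])).continuousAt.continuousWithinAt
  · intro x hx
    rw [interior_Icc] at hx
    exact (hasDeriv_auxF0 x (by linarith [hx.1])).hasDerivWithinAt
  · intro x hx
    rw [interior_Icc] at hx
    exact (hasDeriv_auxF1 x (by linarith [hx.1])).hasDerivWithinAt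
  · intro x hx
    rw [interior_Icc] at hx
    exact auxF2_nonneg x hx.1 hx.2

private lemma auxF0_zero : auxF0 0 = 0 := by
  unfold auxF0
  simp

private lemma auxF0_one : auxF0 1 = 0 := by
  unfold auxF0
  have htel : ∑ j ∈ Finset.range 999, (Real.log ((j:ℝ)+1) - Real.log ((j:ℝ)+1+1))
      = Real.log ((0:ℝ)+1) - Real.log (((999:ℕ):ℝ)+1) := by
    have : ∀ j : ℕ, Real.log ((j:ℝ)+1+1) = Real.log (((j+1:ℕ):ℝ)+1) := by
      intro j; push_cast; ring_nf
    calc ∑ j ∈ Finset.range 999, (Real.log ((j:ℝ)+1) - Real.log ((j:ℝ)+1+1))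
        = ∑ j ∈ Finset.range 999, ((fun k : ℕ => Real.log ((k:ℝ)+1)) j
            - (fun k : ℕ => Real.log ((k:ℝ)+1)) (j+1)) := by
          apply Finset.sum_congr rfl
          intro j _
          simp only []
          rw [this j]
      _ = _ := by rw [Finset.sum_range_sub' (fun k : ℕ => Real.log ((k:ℝ)+1))]; norm_num
  rw [htel]
  have h2 : Real.exp 1 - 1 + 1 = Real.exp 1 := by ring
  rw [h2, Real.log_exp]
  norm_num

private lemma auxF0_nonpos (a : ℝ) (h0 : 0 ≤ a) (h1 : a ≤ 1) : auxF0 a ≤ 0 := by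
  have h := auxF0_convex.2 (Set.left_mem_Icc.mpr zero_le_one) (Set.right_mem_Icc.mpr zero_le_one)
    (by linarith : (0:ℝ) ≤ 1 - a) (by linarith : (0:ℝ) ≤ a) (by ring : (1 - a) + a = 1)
  simp only [smul_eq_mul, mul_zero, mul_one, zero_add] at h
  rw [auxF0_zero, auxF0_one] at h
  simpa using h

private lemma Gamma_prod (a : ℝ) (ha : 0 < a) : ∀ k : ℕ,
    Real.Gamma (a + 1 + k) = Real.Gamma (a+1) * ∏ j ∈ Finset.range k, ((j:ℝ)+1+a) := by
  intro k
  induction k with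
  | zero => simp
  | succ k ih =>
    have hne : a + 1 + (k:ℝ) ≠ 0 := by positivity
    have : a + 1 + ((k+1:ℕ):ℝ) = (a + 1 + (k:ℝ)) + 1 := by push_cast; ring
    rw [this, Real.Gamma_add_one hne, ih, Finset.prod_range_succ]
    ring

private lemma log_Gamma_convex_step (a : ℝ) (h0 : 0 ≤ a) (h1 : a ≤ 1) :
    Real.log (Real.Gamma (1000 + a))
      ≤ (1-a) * Real.log (Real.Gamma 1000) + a * Real.log (Real.Gamma 1001) := by
  have h := Real.convexOn_log_Gamma.2 (x := 1000) (y := 1001)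
    (by norm_num : (1000:ℝ) ∈ Set.Ioi (0:ℝ)) (by norm_num : (1001:ℝ) ∈ Set.Ioi (0:ℝ))
    (by linarith : (0:ℝ) ≤ 1 - a) h0 (by ring)
  have heq : (1-a) • (1000:ℝ) + a • (1001:ℝ) = 1000 + a := by
    simp only [smul_eq_mul]; ring
  rw [heq] at h
  simpa [Function.comp, smul_eq_mul] using h

private lemma log_factorial_sum :
    Real.log ((999:ℕ).factorial : ℝ) = ∑ j ∈ Finset.range 999, Real.log ((j:ℝ)+1) := by
  rw [← Finset.prod_range_add_one_eq_factorial]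
  push_cast
  rw [Real.log_prod]
  intro j _
  have : (0:ℝ) < (j:ℝ)+1 := by positivity
  exact ne_of_gt this

private lemma log_Gamma_le (a : ℝ) (h0 : 0 < a) (h1 : a ≤ 1) :
    Real.log (Real.Gamma (1+a)) ≤ a * (Real.log (Real.exp 1 - 1 + a) - 1) := by
  have he := Real.exp_one_gt_d9
  -- Gamma values at integers
  have hG1000 : Real.Gamma 1000 = ((999:ℕ).factorial : ℝ) := by
    have h := Real.Gamma_nat_eq_factorial 999
    have h9 : ((999:ℕ):ℝ) + 1 = 1000 := by norm_num
    rw [h9] at h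
    exact h
  have hG1001 : Real.Gamma 1001 = 1000 * ((999:ℕ).factorial : ℝ) := by
    have h := Real.Gamma_add_one (by norm_num : (1000:ℝ) ≠ 0)
    have : (1000:ℝ) + 1 = 1001 := by norm_num
    rw [this] at h
    rw [h, hG1000]
  -- product formula
  have hprod := Gamma_prod a h0 999
  have hpt : a + 1 + ((999:ℕ):ℝ) = 1000 + a := by push_cast; ring
  rw [hpt] at hprod
  have hGa1 : (0:ℝ) < Real.Gamma (a+1) := Real.Gamma_pos_of_pos (by linarith)
  have hppos : ∀ j ∈ Finset.range 999, (0:ℝ) < (j:ℝ)+1+a := by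
    intro j _
    have : (0:ℝ) ≤ (j:ℝ) := Nat.cast_nonneg j
    linarith
  have hprodpos : (0:ℝ) < ∏ j ∈ Finset.range 999, ((j:ℝ)+1+a) :=
    Finset.prod_pos hppos
  have hlogprod : Real.log (Real.Gamma (1000 + a))
      = Real.log (Real.Gamma (a+1)) + ∑ j ∈ Finset.range 999, Real.log ((j:ℝ)+1+a) := by
    rw [hprod, Real.log_mul (ne_of_gt hGa1) (ne_of_gt hprodpos), Real.log_prod]
    intro j hj
    exact ne_of_gt (hppos j hj)
  have hstep := log_Gamma_convex_step a h0.le h1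
  rw [hG1000, hG1001, hlogprod] at hstep
  have hfact : (0:ℝ) < ((999:ℕ).factorial : ℝ) := by positivity
  rw [Real.log_mul (by norm_num) (ne_of_gt hfact)] at hstep
  -- hstep : log Γ(a+1) + ∑ log(j+1+a) ≤ (1-a) log 999! + a (log 1000 + log 999!)
  have hphi := auxF0_nonpos a h0.le h1
  unfold auxF0 at hphi
  rw [Finset.sum_sub_distrib] at hphi
  rw [log_factorial_sum] at hstep
  have h1a : Real.Gamma (1+a) = Real.Gamma (a+1) := by rw [add_comm]
  rw [h1a]
  linarith

private lemma star (a : ℝ) (h0 : 0 < a) (h1 : a ≤ 1) :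
    Real.Gamma (1+a) ^ (1/a) ≤ (Real.exp 1 - 1 + a)/Real.exp 1 := by
  have he := Real.exp_one_gt_d9
  have hψ : (0:ℝ) < (Real.exp 1 - 1 + a)/Real.exp 1 := by
    apply div_pos (by linarith) (by linarith)
  have hG : (0:ℝ) < Real.Gamma (1+a) := Real.Gamma_pos_of_pos (by linarith)
  have hlogψ : Real.log ((Real.exp 1 - 1 + a)/Real.exp 1) = Real.log (Real.exp 1 - 1 + a) - 1 := by
    rw [Real.log_div (by linarith) (by linarith), Real.log_exp]
  have key : Real.Gamma (1+a) ≤ ((Real.exp 1 - 1 + a)/Real.exp 1) ^ a := by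
    rw [Real.rpow_def_of_pos hψ, hlogψ]
    calc Real.Gamma (1+a) = Real.exp (Real.log (Real.Gamma (1+a))) := (Real.exp_log hG).symm
      _ ≤ Real.exp (a * (Real.log (Real.exp 1 - 1 + a) - 1)) := by
          exact Real.exp_le_exp.mpr (log_Gamma_le a h0 h1)
      _ = Real.exp ((Real.log (Real.exp 1 - 1 + a) - 1) * a) := by rw [mul_comm]
  calc Real.Gamma (1+a) ^ (1/a) ≤ (((Real.exp 1 - 1 + a)/Real.exp 1) ^ a) ^ (1/a) := by
        exact Real.rpow_le_rpow hG.le key (by positivity)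
    _ = ((Real.exp 1 - 1 + a)/Real.exp 1) ^ (a * (1/a)) := (Real.rpow_mul hψ.le a (1/a)).symm
    _ = (Real.exp 1 - 1 + a)/Real.exp 1 := by
        rw [mul_one_div_cancel (ne_of_gt h0), Real.rpow_one]

end AuxStmt7

section AuxStmt7b
open Finset Set

private lemma pointwise_bound (a m t : ℝ) (ha : 0 < a) (ha1 : a ≤ 1) (hm : 0 < m)
    (hm1 : m ≤ (Real.exp 1 - 1 + a)/Real.exp 1) (ht : 0 < t) :
    Real.exp ((a-1)*Real.log m) * Real.exp (-(1/m*t)) ≤ Real.exp (-t) * t^(a-1) := by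
  have he : (0:ℝ) < Real.exp 1 := Real.exp_pos 1
  rw [Real.rpow_def_of_pos ht, ← Real.exp_add, ← Real.exp_add, Real.exp_le_exp]
  -- goal: (a-1)*log m + -(1/m*t) ≤ -t + log t * (a-1)
  set s : ℝ := t/m with hs
  have hs0 : 0 < s := div_pos ht hm
  have hlogdiv : Real.log s = Real.log t - Real.log m := Real.log_div ht.ne' hm.ne'
  have hls : Real.log s ≤ s / Real.exp 1 := by
    have h1 := Real.log_le_sub_one_of_pos (div_pos hs0 he)
    rw [Real.log_div hs0.ne' he.ne', Real.log_exp] at h1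
    linarith
  have hmm : (1-a)/Real.exp 1 ≤ 1-m := by
    rw [le_div_iff₀ he] at hm1
    rw [div_le_iff₀ he]
    linarith
  have h2 : (1-a) * Real.log s ≤ (1-a) * (s / Real.exp 1) :=
    mul_le_mul_of_nonneg_left hls (by linarith)
  have h3 : ((1-a)/Real.exp 1) * s ≤ (1-m) * s :=
    mul_le_mul_of_nonneg_right hmm hs0.le
  have h4 : (1-a) * (s / Real.exp 1) = ((1-a)/Real.exp 1) * s := by ring
  have h5 : (1-a) * Real.log s ≤ (1-m) * s := by linarith
  have h7 : m * s = t := by rw [hs]; field_simp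
  rw [show 1/m*t = t/m by ring, ← hs, hlogdiv] at *
  nlinarith [h5, h7]

private lemma integral_exp_scaled (m z : ℝ) (hm : 0 < m) :
    ∫ t in Set.Ioi z, Real.exp (-(1/m*t)) = m * Real.exp (-(1/m*z)) := by
  have h := MeasureTheory.integral_comp_mul_left_Ioi (fun x => Real.exp (-x)) z
    (b := 1/m) (by positivity)
  simp only [smul_eq_mul] at h
  rw [integral_exp_neg_Ioi] at h
  rw [h]
  congr 1
  · rw [one_div, inv_inv]



theorem stmt7 (a y z : ℝ) (ha : 0 < a) (ha1 : a ≤ 1) (hy0 : 0 < y) (hya : y ≤ a)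
    (hz : 0 ≤ z) (hQ : regQ a z = y) :
    Real.Gamma (1 + a) ^ (1 / a) * Real.log (a / y) ≤ z := by
  have he := Real.exp_one_gt_d9
  have hΓa : 0 < Real.Gamma a := Real.Gamma_pos_of_pos ha
  have hΓ1a : 0 < Real.Gamma (1+a) := Real.Gamma_pos_of_pos (by linarith)
  set m := Real.Gamma (1+a) ^ (1/a) with hm
  have hm0 : 0 < m := Real.rpow_pos_of_pos hΓ1a _
  have hstar := star a ha ha1
  -- upper Gamma lower bound
  have hup : Real.Gamma (1+a) * Real.exp (-(1/m*z)) ≤ upperGamma a z := by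
    have hint1 : IntegrableOn
        (fun t => Real.exp ((a-1)*Real.log m) * Real.exp (-(1/m*t))) (Set.Ioi z) := by
      have h := (exp_neg_integrableOn_Ioi z (b := 1/m) (by positivity)).const_mul
        (Real.exp ((a-1)*Real.log m))
      simpa [neg_mul, IntegrableOn] using h
    have hint2 : IntegrableOn (fun t => Real.exp (-t) * t^(a-1)) (Set.Ioi z) :=
      (Real.GammaIntegral_convergent ha).mono_set (Set.Ioi_subset_Ioi hz)
    have hmono := MeasureTheory.setIntegral_mono_on hint1 hint2 measurableSet_Ioi
      (fun t htt => pointwise_bound a m t ha ha1 hm0 hstar (lt_of_le_of_lt hz htt))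
    have hcalc : ∫ t in Set.Ioi z, Real.exp ((a-1)*Real.log m) * Real.exp (-(1/m*t))
        = Real.Gamma (1+a) * Real.exp (-(1/m*z)) := by
      rw [MeasureTheory.integral_const_mul, integral_exp_scaled m z hm0]
      have hK : Real.exp ((a-1)*Real.log m) * m = Real.Gamma (1+a) := by
        rw [mul_comm (a-1) (Real.log m), ← Real.rpow_def_of_pos hm0]
        nth_rewrite 2 [← Real.rpow_one m]
        rw [← Real.rpow_add hm0]
        have : a - 1 + 1 = a := by ring
        rw [this, hm, ← Real.rpow_mul hΓ1a.le, one_div_mul_cancel (ne_of_gt ha), Real.rpow_one]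
      rw [← hK]
      ring
    rw [← hcalc]
    unfold upperGamma
    exact hmono
  -- conclude a * exp(-(z/m)) ≤ y
  have hUG : upperGamma a z = y * Real.Gamma a := by
    rw [← hQ]
    unfold regQ
    field_simp
  have hΓadd : Real.Gamma (1+a) = a * Real.Gamma a := by
    rw [add_comm, Real.Gamma_add_one (ne_of_gt ha)]
  rw [hΓadd, hUG] at hup
  have hy : a * Real.exp (-(1/m*z)) ≤ y := by
    have h2 : (a * Real.exp (-(1/m*z))) * Real.Gamma a ≤ y * Real.Gamma a := by linarith
    exact le_of_mul_le_mul_right h2 hΓa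
  have hexp0 : (0:ℝ) < Real.exp (-(1/m*z)) := Real.exp_pos _
  have hlog : Real.log (a/y) ≤ 1/m*z := by
    rw [Real.log_div (ne_of_gt ha) (ne_of_gt hy0)]
    have h2 : Real.log (a * Real.exp (-(1/m*z))) ≤ Real.log y :=
      Real.log_le_log (by positivity) hy
    rw [Real.log_mul (ne_of_gt ha) (ne_of_gt hexp0), Real.log_exp] at h2
    linarith
  calc m * Real.log (a/y) ≤ m * (1/m*z) := mul_le_mul_of_nonneg_left hlog hm0.le
    _ = z := by field_simp

end AuxStmt7b
end

section
/- Fix an integer k ≥ 1 and 0 < a < 1. Let Y be the minimum of L+1 i.i.d. Gamma(k,1) random variables and let m̂ = m − L with L ≤ m/2. Then E[Γ(a, m̂ Y^k/k!) − Γ(a, m Y^k/k!)] = O(L²/m²) as m → ∞ (with L = L(m) → ∞, L = o(m)). -/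
open MeasureTheory Real Filter ProbabilityTheory

/-!
Write `s = (m - L)/k!` and `t = m/k!`. For `a ≤ 1` the integrand `e^{-u} u^{a-1}` of `Γ(a, ·)` is
decreasing, so `Γ(a, s y^k) - Γ(a, t y^k) ≤ (t - s) y^k e^{-s y^k} (s y^k)^{a-1}`. The density of `Y`
is at most `(L + 1) y^{k-1} / Γ(k)`, and the product of the two bounds integrates in closed form
(a Gamma integral after `u = s y^k`) to `Γ(a + 1) (L + 1) L / (m - L)^2`, which is at most
`8 Γ(a + 1) L² / m²` as soon as `2 L ≤ m`.
-/

lemma integrableOn_Ioi_gammaIntegrand {a x : ℝ} (ha : 0 < a) (hx : 0 ≤ x) :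
    IntegrableOn (fun t => exp (-t) * t ^ (a - 1)) (Set.Ioi x) :=
  (GammaIntegral_convergent ha).mono_set (Set.Ioi_subset_Ioi hx)

lemma upperGamma_nonneg (a : ℝ) {x : ℝ} (hx : 0 ≤ x) : 0 ≤ upperGamma a x :=
  setIntegral_nonneg measurableSet_Ioi fun t ht =>
    have : 0 < t := hx.trans_lt ht
    by positivity

lemma upperGamma_le_upperGamma {a : ℝ} (ha : 0 < a) {x₀ x₁ : ℝ} (hx₀ : 0 ≤ x₀) (h : x₀ ≤ x₁) :
    upperGamma a x₁ ≤ upperGamma a x₀ := by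
  refine setIntegral_mono_set (integrableOn_Ioi_gammaIntegrand ha hx₀) ?_
    (Set.Ioi_subset_Ioi h).eventuallyLE
  filter_upwards [ae_restrict_mem measurableSet_Ioi] with t ht
  have : 0 < t := hx₀.trans_lt ht
  positivity

lemma upperGamma_le_Gamma {a : ℝ} (ha : 0 < a) {x : ℝ} (hx : 0 ≤ x) :
    upperGamma a x ≤ Gamma a := by
  rw [Gamma_eq_integral ha]
  exact upperGamma_le_upperGamma ha le_rfl hx

lemma regQ_nonneg {a : ℝ} (ha : 0 < a) {x : ℝ} (hx : 0 ≤ x) : 0 ≤ regQ a x :=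
  div_nonneg (upperGamma_nonneg a hx) (Gamma_pos_of_pos ha).le

lemma regQ_le_one {a : ℝ} (ha : 0 < a) {x : ℝ} (hx : 0 ≤ x) : regQ a x ≤ 1 :=
  (div_le_one (Gamma_pos_of_pos ha)).mpr (upperGamma_le_Gamma ha hx)

lemma upperGamma_sub_upperGamma_le {a : ℝ} (ha0 : 0 < a) (ha1 : a ≤ 1) {x₀ x₁ : ℝ}
    (hx₀ : 0 < x₀) (h : x₀ ≤ x₁) :
    upperGamma a x₀ - upperGamma a x₁ ≤ (x₁ - x₀) * exp (-x₀) * x₀ ^ (a - 1) := by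
  have hi := integrableOn_Ioi_gammaIntegrand ha0 hx₀.le
  have hsplit : upperGamma a x₀ =
      (∫ t in Set.Ioc x₀ x₁, exp (-t) * t ^ (a - 1)) + upperGamma a x₁ := by
    rw [upperGamma, upperGamma, ← setIntegral_union (Set.Ioc_disjoint_Ioi le_rfl)
      measurableSet_Ioi (hi.mono_set Set.Ioc_subset_Ioi_self)
      (hi.mono_set (Set.Ioi_subset_Ioi h)), Set.Ioc_union_Ioi_eq_Ioi h]
  rw [hsplit, add_sub_cancel_right, mul_assoc]
  calc (∫ t in Set.Ioc x₀ x₁, exp (-t) * t ^ (a - 1))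
      ≤ ∫ _ in Set.Ioc x₀ x₁, exp (-x₀) * x₀ ^ (a - 1) :=
        setIntegral_mono_on (hi.mono_set Set.Ioc_subset_Ioi_self)
          (integrableOn_const measure_Ioc_lt_top.ne) measurableSet_Ioc fun t ht =>
            mul_le_mul (exp_le_exp.mpr (neg_le_neg ht.1.le))
              (rpow_le_rpow_of_nonpos hx₀ ht.1.le (by linarith))
              (rpow_nonneg (hx₀.trans ht.1).le _) (exp_nonneg _)
    _ = (x₁ - x₀) * (exp (-x₀) * x₀ ^ (a - 1)) := by
        rw [setIntegral_const, measureReal_def, volume_Ioc, smul_eq_mul,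
          ENNReal.toReal_ofReal (by linarith)]

/-- The density of the minimum of `L + 1` i.i.d. `Gamma(k, 1)` random variables. -/
noncomputable def minGammaDensity (k : ℝ) (L : ℕ) (x : ℝ) : ℝ :=
  (L + 1) / Gamma k * exp (-x) * x ^ (k - 1) * regQ k x ^ L

lemma minGammaDensity_nonneg {k : ℝ} (hk : 0 < k) (L : ℕ) {x : ℝ} (hx : 0 < x) :
    0 ≤ minGammaDensity k L x := by
  have := Gamma_pos_of_pos hk
  have := regQ_nonneg hk hx.le
  unfold minGammaDensity
  positivity

lemma minGammaDensity_le {k : ℝ} (hk : 0 < k) (L : ℕ) {x : ℝ} (hx : 0 < x) :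
    minGammaDensity k L x ≤ (L + 1) / Gamma k * x ^ (k - 1) := by
  have := Gamma_pos_of_pos hk
  have hQ0 := regQ_nonneg hk hx.le
  calc minGammaDensity k L x ≤ (L + 1) / Gamma k * 1 * x ^ (k - 1) * 1 := by
        unfold minGammaDensity
        gcongr
        · exact exp_le_one_iff.mpr (by linarith)
        · exact pow_le_one₀ hQ0 (regQ_le_one hk hx.le)
    _ = (L + 1) / Gamma k * x ^ (k - 1) := by ring

lemma upperGamma_sub_upperGamma_mul_rpow_le {a p s t x : ℝ} (ha0 : 0 < a) (ha1 : a ≤ 1)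
    (hs : 0 < s) (hst : s ≤ t) (hx : 0 < x) :
    upperGamma a (s * x ^ p) - upperGamma a (t * x ^ p) ≤
      (t - s) * s ^ (a - 1) * (x ^ (p * a) * exp (-s * x ^ p)) := by
  have hxp : 0 < x ^ p := rpow_pos_of_pos hx p
  refine (upperGamma_sub_upperGamma_le ha0 ha1 (mul_pos hs hxp)
    (mul_le_mul_of_nonneg_right hst hxp.le)).trans_eq ?_
  rw [mul_rpow hs.le hxp.le, ← rpow_mul hx.le,
    show p * a = p + p * (a - 1) by ring, rpow_add hx, neg_mul]
  ring

theorem norm_integral_mul_upperGamma_sub_le {a p s t C : ℝ} (ha0 : 0 < a) (ha1 : a ≤ 1)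
    (hp : 0 < p) (hs : 0 < s) (hst : s ≤ t) {w : ℝ → ℝ} (hw0 : ∀ x > 0, 0 ≤ w x)
    (hw : ∀ x > 0, w x ≤ C * x ^ (p - 1)) :
    ‖∫ x in Set.Ioi 0, w x * (upperGamma a (s * x ^ p) - upperGamma a (t * x ^ p))‖ ≤
      C * (t - s) * Gamma (a + 1) / (p * s ^ 2) := by
  set q := p * a + p - 1
  have hq : -1 < q := by have := mul_pos hp ha0; linarith
  have hqp : (q + 1) / p = a + 1 := by field_simp; ring
  have hbound : ∀ x > 0, ‖w x * (upperGamma a (s * x ^ p) - upperGamma a (t * x ^ p))‖ ≤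
      C * (t - s) * s ^ (a - 1) * (x ^ q * exp (-s * x ^ p)) := by
    intro x hx
    have hxp : 0 < x ^ p := rpow_pos_of_pos hx p
    have hdiff0 : 0 ≤ upperGamma a (s * x ^ p) - upperGamma a (t * x ^ p) :=
      sub_nonneg.mpr (upperGamma_le_upperGamma ha0 (by positivity)
        (mul_le_mul_of_nonneg_right hst hxp.le))
    rw [norm_of_nonneg (mul_nonneg (hw0 x hx) hdiff0)]
    calc w x * (upperGamma a (s * x ^ p) - upperGamma a (t * x ^ p))
        ≤ C * x ^ (p - 1) * ((t - s) * s ^ (a - 1) * (x ^ (p * a) * exp (-s * x ^ p))) :=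
          mul_le_mul (hw x hx) (upperGamma_sub_upperGamma_mul_rpow_le ha0 ha1 hs hst hx) hdiff0
            ((hw0 x hx).trans (hw x hx))
      _ = C * (t - s) * s ^ (a - 1) * (x ^ q * exp (-s * x ^ p)) := by
          rw [show q = (p - 1) + p * a by ring, rpow_add hx]
          ring
  have hs2 : s ^ (a - 1) * s ^ (-(q + 1) / p) = (s ^ 2)⁻¹ := by
    rw [neg_div, hqp, ← rpow_add hs, show a - 1 + -(a + 1) = -(2 : ℕ) by push_cast; ring,
      rpow_neg hs.le, rpow_natCast]
  calc _ ≤ ∫ x in Set.Ioi 0, C * (t - s) * s ^ (a - 1) * (x ^ q * exp (-s * x ^ p)) :=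
        norm_integral_le_of_norm_le
          ((integrableOn_rpow_mul_exp_neg_mul_rpow hq hp hs).const_mul _)
          ((ae_restrict_mem measurableSet_Ioi).mono hbound)
    _ = C * (t - s) * Gamma (a + 1) / (p * s ^ 2) := by
        rw [integral_const_mul, integral_rpow_mul_exp_neg_mul_rpow hp hq hs, hqp,
          show ∀ y z : ℝ, C * (t - s) * y * (z * (1 / p) * Gamma (a + 1)) =
            C * (t - s) * (y * z) * Gamma (a + 1) / p from fun _ _ => by ring, hs2]
        field_simp

lemma natCast_succ_mul_div_sub_sq_le {L m : ℕ} (h : 2 * L ≤ m) :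
    ((L : ℝ) + 1) * L / ((m : ℝ) - L) ^ 2 ≤ 8 * ((L : ℝ) ^ 2 / (m : ℝ) ^ 2) := by
  rcases Nat.eq_zero_or_pos L with rfl | hL
  · simp
  have hL1 : (1 : ℝ) ≤ L := by exact_mod_cast hL
  have h2L : 2 * (L : ℝ) ≤ m := by exact_mod_cast h
  rw [← mul_div_assoc, div_le_div_iff₀ (by nlinarith) (by nlinarith)]
  nlinarith [mul_le_mul h2L h2L (by positivity) (by positivity), sq_nonneg ((m : ℝ) - 2 * L),
    mul_nonneg (by linarith : (0 : ℝ) ≤ L - 1) (sq_nonneg ((m : ℝ) - L))]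

theorem stmt16_general (k : ℕ) (hk : 1 ≤ k) (a : ℝ) (ha0 : 0 < a) (ha1 : a < 1) (L : ℕ → ℕ)
    (hL2 : ∀ m, L m ≤ m / 2) :
    (fun m : ℕ =>
        ∫ x in Set.Ioi (0 : ℝ),
          (((L m : ℝ) + 1) / Real.Gamma k * Real.exp (-x) * x ^ ((k : ℝ) - 1) *
              regQ k x ^ (L m)) *
            (upperGamma a (((m : ℝ) - L m) * x ^ k / (Nat.factorial k)) -
              upperGamma a ((m : ℝ) * x ^ k / (Nat.factorial k))))
      =O[atTop] (fun m : ℕ => (L m : ℝ) ^ 2 / (m : ℝ) ^ 2) := by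
  refine Asymptotics.IsBigO.of_bound (8 * Gamma (a + 1)) ?_
  filter_upwards [eventually_gt_atTop 0] with m hm
  have hk0 : (0 : ℝ) < k := by exact_mod_cast hk
  have h2L : 2 * L m ≤ m := by have := hL2 m; omega
  have hLm : (L m : ℝ) < m := by
    have : L m < m := by omega
    exact_mod_cast this
  set s := ((m : ℝ) - L m) / k.factorial
  set t := (m : ℝ) / k.factorial
  have hs : 0 < s := div_pos (by linarith) (by positivity)
  have hst : s ≤ t := div_le_div_of_nonneg_right (by linarith) (by positivity)
  have hbound := norm_integral_mul_upperGamma_sub_le ha0 ha1.le hk0 hs hst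
    (fun x hx => minGammaDensity_nonneg hk0 (L m) hx) (fun x hx => minGammaDensity_le hk0 (L m) hx)
  have hscale : ∀ (c : ℝ) (x : ℝ), c * x ^ k / k.factorial = c / k.factorial * x ^ (k : ℝ) :=
    fun c x => by rw [rpow_natCast]; ring
  have hconst : ((L m : ℝ) + 1) / Gamma k * (t - s) * Gamma (a + 1) / (k * s ^ 2) =
      Gamma (a + 1) * (((L m : ℝ) + 1) * L m / ((m : ℝ) - L m) ^ 2) := by
    have hkΓ : (k : ℝ) * Gamma k = k.factorial := by
      rw [← Gamma_add_one hk0.ne', Gamma_nat_eq_factorial]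
    have : (m : ℝ) - L m ≠ 0 := by linarith
    simp only [s, t]
    field_simp
    rw [← hkΓ]
    ring
  simp only [hscale]
  refine (hbound.trans_eq hconst).trans ?_
  rw [norm_of_nonneg (by positivity), mul_assoc, mul_left_comm]
  exact mul_le_mul_of_nonneg_left (natCast_succ_mul_div_sub_sq_le h2L)
    (Gamma_pos_of_pos (by linarith : (0 : ℝ) < a + 1)).le

theorem stmt16 (k : ℕ) (hk : 1 ≤ k) (a : ℝ) (ha0 : 0 < a) (ha1 : a < 1) (L : ℕ → ℕ)
    (hL2 : ∀ m, L m ≤ m / 2)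
    (hL1 : Tendsto (fun m : ℕ => L m) atTop atTop)
    (hLo : (fun m : ℕ => (L m : ℝ)) =o[atTop] (fun m : ℕ => (m : ℝ))) :
    (fun m : ℕ =>
        ∫ x in Set.Ioi (0 : ℝ),
          (((L m : ℝ) + 1) / Real.Gamma k * Real.exp (-x) * x ^ ((k : ℝ) - 1) *
              regQ k x ^ (L m)) *
            (upperGamma a (((m : ℝ) - L m) * x ^ k / (Nat.factorial k)) -
              upperGamma a ((m : ℝ) * x ^ k / (Nat.factorial k))))
      =O[atTop] (fun m : ℕ => (L m : ℝ) ^ 2 / (m : ℝ) ^ 2) :=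
  stmt16_general k hk a ha0 ha1 L hL2
end

section
/- Let 0 < a ≤ 1 and γ ∈ [0,1], set C = Γ(a), and define F(x) = ∑_{s=1}^{∞} x^{-1} C · 2^{{γ + lg(x/C)} − s} · Q^{-1}(a, 2^{{γ + lg(x/C)} − s}) for x > 0, with Q^{-1}(a,y) := 0 for y > 1 and {·} the fractional part, lg the base-2 logarithm. Then the series defining F(x) converges for every x > 0; moreover F(x) → 0 as x → ∞. -/
open MeasureTheory Real Filter ProbabilityTheory

lemma upperGamma_le_exp (a z : ℝ) (ha0 : 0 < a) (ha1 : a ≤ 1) (hz : 1 ≤ z) :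
    upperGamma a z ≤ Real.exp (-z) := by
  have hz0 : (0 : ℝ) < z := by linarith
  have hint : IntegrableOn (fun t : ℝ => Real.exp (-t) * t ^ (a - 1)) (Set.Ioi z) :=
    (Real.GammaIntegral_convergent ha0).mono_set (Set.Ioi_subset_Ioi hz0.le)
  have hint2 : IntegrableOn (fun t : ℝ => Real.exp (-t)) (Set.Ioi z) := by
    simpa using exp_neg_integrableOn_Ioi z one_pos
  calc upperGamma a z ≤ ∫ t in Set.Ioi z, Real.exp (-t) := by
        refine setIntegral_mono_on hint hint2 measurableSet_Ioi ?_
        intro t ht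
        have ht1 : 1 ≤ t := le_trans hz (le_of_lt ht)
        have : t ^ (a - 1) ≤ 1 :=
          Real.rpow_le_one_of_one_le_of_nonpos ht1 (by linarith)
        calc Real.exp (-t) * t ^ (a - 1) ≤ Real.exp (-t) * 1 := by
              exact mul_le_mul_of_nonneg_left this (Real.exp_pos _).le
          _ = Real.exp (-t) := mul_one _
    _ = Real.exp (-z) := integral_exp_neg_Ioi z

theorem stmt19 (a γ : ℝ) (ha0 : 0 < a) (ha1 : a ≤ 1) (hγ0 : 0 ≤ γ) (hγ1 : γ ≤ 1)
    (Qinv : ℝ → ℝ)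
    (hQinv : ∀ y : ℝ, 0 < y → y ≤ 1 → 0 ≤ Qinv y ∧ regQ a (Qinv y) = y)
    (hQinv1 : ∀ y : ℝ, 1 < y → Qinv y = 0) :
    (∀ x : ℝ, 0 < x →
        Summable (fun s : ℕ =>
          x⁻¹ * Real.Gamma a *
            (2 : ℝ) ^ (Int.fract (γ + Real.logb 2 (x / Real.Gamma a)) - ((s : ℝ) + 1)) *
            Qinv ((2 : ℝ) ^
              (Int.fract (γ + Real.logb 2 (x / Real.Gamma a)) - ((s : ℝ) + 1))))) ∧
      Tendsto (fun x : ℝ =>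
          ∑' s : ℕ,
            x⁻¹ * Real.Gamma a *
              (2 : ℝ) ^ (Int.fract (γ + Real.logb 2 (x / Real.Gamma a)) - ((s : ℝ) + 1)) *
              Qinv ((2 : ℝ) ^
                (Int.fract (γ + Real.logb 2 (x / Real.Gamma a)) - ((s : ℝ) + 1))))
        atTop (nhds 0) := by
  have hGa : 0 < Real.Gamma a := Real.Gamma_pos_of_pos ha0
  -- key bound on Qinv
  have hQbound : ∀ y : ℝ, 0 < y → y ≤ 1 →
      Qinv y ≤ 1 + (-Real.log y) + |Real.log (Real.Gamma a)| := by
    intro y hy0 hy1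
    obtain ⟨hz0, hzQ⟩ := hQinv y hy0 hy1
    set z := Qinv y with hzdef
    have hlogy : 0 ≤ -Real.log y := by
      simpa using Real.log_nonpos hy0.le hy1
    rcases le_or_gt z 1 with h | h
    · have : (0:ℝ) ≤ |Real.log (Real.Gamma a)| := abs_nonneg _
      linarith
    · -- z > 1, so y * Γ a = upperGamma a z ≤ exp (-z)
      have hub : upperGamma a z = y * Real.Gamma a := by
        have := hzQ
        rw [regQ] at this
        field_simp at this
        linarith [this]
      have hle : y * Real.Gamma a ≤ Real.exp (-z) := by
        rw [← hub]; exact upperGamma_le_exp a z ha0 ha1 h.le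
      have hpos : 0 < y * Real.Gamma a := mul_pos hy0 hGa
      have : Real.log (y * Real.Gamma a) ≤ -z := by
        calc Real.log (y * Real.Gamma a) ≤ Real.log (Real.exp (-z)) :=
              Real.log_le_log hpos hle
          _ = -z := Real.log_exp _
      rw [Real.log_mul hy0.ne' hGa.ne'] at this
      have hab : Real.log (Real.Gamma a) ≥ -|Real.log (Real.Gamma a)| :=
        neg_abs_le _
      linarith
  -- uniform majorant
  set B : ℕ → ℝ := fun s => 1 + ((s : ℝ) + 1) * Real.log 2 + |Real.log (Real.Gamma a)|
    with hB
  have hBnonneg : ∀ s, 0 ≤ B s := by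
    intro s
    have h2 : (0:ℝ) ≤ Real.log 2 := Real.log_nonneg one_le_two
    have : (0:ℝ) ≤ ((s : ℝ) + 1) * Real.log 2 :=
      mul_nonneg (by positivity) h2
    have := abs_nonneg (Real.log (Real.Gamma a))
    simp only [hB]; positivity
  have hMu : Summable (fun s : ℕ => (2 : ℝ)⁻¹ ^ s * B s) := by
    have h1 : Summable (fun s : ℕ => ((s:ℝ) * (2:ℝ)⁻¹ ^ s)) := by
      have := summable_pow_mul_geometric_of_norm_lt_one (R := ℝ) 1
        (r := (2:ℝ)⁻¹) (by rw [norm_inv]; norm_num)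
      simpa [pow_one] using this
    have h2 : Summable (fun s : ℕ => (2:ℝ)⁻¹ ^ s) :=
      summable_geometric_of_lt_one (by norm_num) (by norm_num)
    have : Summable (fun s : ℕ =>
        ((s:ℝ) * (2:ℝ)⁻¹ ^ s) * Real.log 2
        + (2:ℝ)⁻¹ ^ s * (1 + Real.log 2 + |Real.log (Real.Gamma a)|)) :=
      ((h1.mul_right _).add (h2.mul_right _))
    refine this.congr fun s => ?_
    simp only [hB]; ring
  set M : ℝ := Real.Gamma a * ∑' s : ℕ, (2 : ℝ)⁻¹ ^ s * B s with hM
  have hMnn : 0 ≤ M :=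
    mul_nonneg hGa.le (tsum_nonneg fun s => mul_nonneg (by positivity) (hBnonneg s))
  -- pointwise bounds for the summands
  have key : ∀ x : ℝ, 0 < x → ∀ s : ℕ,
      (0 ≤ x⁻¹ * Real.Gamma a *
          (2 : ℝ) ^ (Int.fract (γ + Real.logb 2 (x / Real.Gamma a)) - ((s : ℝ) + 1)) *
          Qinv ((2 : ℝ) ^
            (Int.fract (γ + Real.logb 2 (x / Real.Gamma a)) - ((s : ℝ) + 1)))) ∧
      (x⁻¹ * Real.Gamma a *
          (2 : ℝ) ^ (Int.fract (γ + Real.logb 2 (x / Real.Gamma a)) - ((s : ℝ) + 1)) *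
          Qinv ((2 : ℝ) ^
            (Int.fract (γ + Real.logb 2 (x / Real.Gamma a)) - ((s : ℝ) + 1)))
        ≤ x⁻¹ * (Real.Gamma a * ((2 : ℝ)⁻¹ ^ s * B s))) := by
    intro x hx s
    set f := Int.fract (γ + Real.logb 2 (x / Real.Gamma a)) with hf
    have hf0 : 0 ≤ f := Int.fract_nonneg _
    have hf1 : f < 1 := Int.fract_lt_one _
    set E : ℝ := f - ((s : ℝ) + 1) with hE
    have hy0 : (0:ℝ) < (2:ℝ) ^ E := Real.rpow_pos_of_pos two_pos _
    have hE0 : E ≤ 0 := by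
      have : (0:ℝ) ≤ (s:ℝ) := Nat.cast_nonneg s
      simp only [hE]; linarith
    have hy1 : (2:ℝ) ^ E ≤ 1 := Real.rpow_le_one_of_one_le_of_nonpos one_le_two hE0
    have hyle : (2:ℝ) ^ E ≤ (2:ℝ)⁻¹ ^ s := by
      have h1 : (2:ℝ) ^ E ≤ (2:ℝ) ^ (-(s:ℝ)) := by
        apply Real.rpow_le_rpow_of_exponent_le one_le_two
        simp only [hE]; linarith
      have h2 : (2:ℝ) ^ (-(s:ℝ)) = (2:ℝ)⁻¹ ^ s := by
        rw [Real.rpow_neg (by norm_num), Real.rpow_natCast, inv_pow]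
      rw [← h2]; exact h1
    have hQnn : 0 ≤ Qinv ((2:ℝ) ^ E) := (hQinv _ hy0 hy1).1
    have hQle : Qinv ((2:ℝ) ^ E) ≤ B s := by
      have := hQbound ((2:ℝ) ^ E) hy0 hy1
      have hlog : -Real.log ((2:ℝ) ^ E) = -E * Real.log 2 := by
        rw [Real.log_rpow two_pos]; ring
      have hElog : -E * Real.log 2 ≤ ((s:ℝ) + 1) * Real.log 2 := by
        apply mul_le_mul_of_nonneg_right _ (Real.log_nonneg one_le_two)
        simp only [hE]; linarith
      simp only [hB]
      rw [hlog] at this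
      linarith
    constructor
    · have : (0:ℝ) ≤ x⁻¹ * Real.Gamma a * (2:ℝ) ^ E :=
        mul_nonneg (mul_nonneg (inv_nonneg.mpr hx.le) hGa.le) hy0.le
      exact mul_nonneg this hQnn
    · have h1 : x⁻¹ * Real.Gamma a * (2:ℝ) ^ E * Qinv ((2:ℝ) ^ E)
          ≤ x⁻¹ * Real.Gamma a * ((2:ℝ)⁻¹ ^ s) * B s := by
        apply mul_le_mul
        · exact mul_le_mul_of_nonneg_left hyle
            (mul_nonneg (inv_nonneg.mpr hx.le) hGa.le)
        · exact hQle
        · exact hQnn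
        · positivity
      calc x⁻¹ * Real.Gamma a * (2:ℝ) ^ E * Qinv ((2:ℝ) ^ E)
          ≤ x⁻¹ * Real.Gamma a * ((2:ℝ)⁻¹ ^ s) * B s := h1
        _ = x⁻¹ * (Real.Gamma a * ((2:ℝ)⁻¹ ^ s * B s)) := by ring
  have hMaj : ∀ x : ℝ, Summable (fun s : ℕ =>
      x⁻¹ * (Real.Gamma a * ((2:ℝ)⁻¹ ^ s * B s))) := by
    intro x
    exact (hMu.mul_left (Real.Gamma a)).mul_left x⁻¹
  have hsum : ∀ x : ℝ, 0 < x →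
      Summable (fun s : ℕ =>
        x⁻¹ * Real.Gamma a *
          (2 : ℝ) ^ (Int.fract (γ + Real.logb 2 (x / Real.Gamma a)) - ((s : ℝ) + 1)) *
          Qinv ((2 : ℝ) ^
            (Int.fract (γ + Real.logb 2 (x / Real.Gamma a)) - ((s : ℝ) + 1)))) := by
    intro x hx
    exact Summable.of_nonneg_of_le (fun s => (key x hx s).1)
      (fun s => (key x hx s).2) (hMaj x)
  refine ⟨hsum, ?_⟩
  -- squeeze between 0 and x⁻¹ * M
  have htend : Tendsto (fun x : ℝ => x⁻¹ * M) atTop (nhds 0) := by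
    simpa using tendsto_inv_atTop_zero.mul_const M
  apply squeeze_zero' (g := fun x : ℝ => x⁻¹ * M) (t₀ := atTop)
  · filter_upwards [eventually_gt_atTop (0:ℝ)] with x hx
    exact tsum_nonneg fun s => (key x hx s).1
  · filter_upwards [eventually_gt_atTop (0:ℝ)] with x hx
    have : (∑' s : ℕ, x⁻¹ * Real.Gamma a *
        (2 : ℝ) ^ (Int.fract (γ + Real.logb 2 (x / Real.Gamma a)) - ((s : ℝ) + 1)) *
        Qinv ((2 : ℝ) ^
          (Int.fract (γ + Real.logb 2 (x / Real.Gamma a)) - ((s : ℝ) + 1))))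
        ≤ ∑' s : ℕ, x⁻¹ * (Real.Gamma a * ((2:ℝ)⁻¹ ^ s * B s)) :=
      Summable.tsum_le_tsum (fun s => (key x hx s).2) (hsum x hx) (hMaj x)
    calc _ ≤ ∑' s : ℕ, x⁻¹ * (Real.Gamma a * ((2:ℝ)⁻¹ ^ s * B s)) := this
      _ = x⁻¹ * M := by
          rw [tsum_mul_left, hM, tsum_mul_left]
  · exact htend
end
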